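/- arXiv:0911.4900 — 3 statements merged into one kernel-verified Lean document; each statement's English description precedes it below -/
import Mathlib

section
/- Let η be a positive nondecreasing sequence with sup_k η(k)/η(κk) < 1 for some integer κ > 1, and let 0 < r < ∞. Then there exist constants c, C > 0 such that for every finite Γ ⊂ ℕ, c·η(|Γ|) ≤ (∑_{k=1}^{|Γ|} η(k)^r / k)^{1/r} ≤ C·η(|Γ|). -/
/-!
With `φ = η ^ r`, which is again monotone, doubling (constant `D ^ r`) and satisfies
`φ k ≤ ε φ (κ k)` with `ε = δ ^ r < 1`, it suffices to show `∑_{k ≤ N} φ k / k ≍ φ N`.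

Upper bound: split the sum at `m = N / κ`. The block `(m, N]` has fewer than `κ (m + 1)` terms,
each at most `φ N / (m + 1)`, so it contributes at most `κ φ N`; the head is at most
`κ φ m / (1 - ε) ≤ κ ε φ N / (1 - ε)` by induction, and the two add up to `κ φ N / (1 - ε)`.

Lower bound: the block `(N / 2, N]` has at least `N / 2` terms, each at least
`φ (N / 2 + 1) / N ≥ φ N / (D ^ r N)` by doubling.
-/

open Finset Real

lemma sum_Icc_one_add_sum_Ioc {M : Type*} [AddCommMonoid M] (f : ℕ → M) {m N : ℕ}
    (hmN : m ≤ N) : ∑ k ∈ Icc 1 m, f k + ∑ k ∈ Ioc m N, f k = ∑ k ∈ Icc 1 N, f k := by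
  rw [← zero_add 1, Icc_add_one_left_eq_Ioc, Icc_add_one_left_eq_Ioc]
  exact sum_Ioc_consecutive f (Nat.zero_le m) hmN

section WeightedSum

variable {φ : ℕ → ℝ}

lemma sum_Ioc_div_le (hmono : MonotoneOn φ (Set.Ici 1)) (hnn : ∀ k, 1 ≤ k → 0 ≤ φ k)
    (m : ℕ) {N : ℕ} (hN : 1 ≤ N) : ∑ k ∈ Ioc m N, φ k / k ≤ N / (m + 1) * φ N := by
  have hterm : ∀ k ∈ Ioc m N, φ k / k ≤ φ N / (m + 1) := by
    intro k hk
    obtain ⟨hmk, hkN⟩ := mem_Ioc.1 hk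
    exact div_le_div₀ (hnn N hN) (hmono (Set.mem_Ici.2 (by omega)) (Set.mem_Ici.2 hN) hkN)
      (by positivity) (by exact_mod_cast hmk)
  calc ∑ k ∈ Ioc m N, φ k / k ≤ #(Ioc m N) • (φ N / (m + 1)) := sum_le_card_nsmul _ _ _ hterm
    _ ≤ N / (m + 1) * φ N := by
      rw [Nat.card_Ioc, nsmul_eq_mul, mul_div_assoc', div_mul_eq_mul_div]
      gcongr
      · exact hnn N hN
      · exact N.sub_le m

lemma le_sum_Ioc_div (hmono : MonotoneOn φ (Set.Ici 1)) (hnn : ∀ k, 1 ≤ k → 0 ≤ φ k)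
    (m N : ℕ) : (N - m : ℕ) / N * φ (m + 1) ≤ ∑ k ∈ Ioc m N, φ k / k := by
  have hterm : ∀ k ∈ Ioc m N, φ (m + 1) / N ≤ φ k / k := by
    intro k hk
    obtain ⟨hmk, hkN⟩ := mem_Ioc.1 hk
    exact div_le_div₀ (hnn k (by omega)) (hmono (Set.mem_Ici.2 (by omega)) (Set.mem_Ici.2 (by omega)) hmk)
      (by norm_cast; omega) (by exact_mod_cast hkN)
  calc (N - m : ℕ) / N * φ (m + 1) = #(Ioc m N) • (φ (m + 1) / N) := by
        rw [Nat.card_Ioc, nsmul_eq_mul]; ring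
    _ ≤ ∑ k ∈ Ioc m N, φ k / k := card_nsmul_le_sum _ _ _ hterm

theorem one_sub_mul_sum_Icc_div_le (hmono : MonotoneOn φ (Set.Ici 1))
    (hnn : ∀ k, 1 ≤ k → 0 ≤ φ k) {κ : ℕ} (hκ : 1 < κ) {δ : ℝ} (hδ0 : 0 ≤ δ) (hδ1 : δ ≤ 1)
    (hgrowth : ∀ k, 1 ≤ k → φ k ≤ δ * φ (κ * k)) {N : ℕ} (hN : 1 ≤ N) :
    (1 - δ) * ∑ k ∈ Icc 1 N, φ k / k ≤ κ * φ N := by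
  induction N using Nat.strong_induction_on with
  | _ N ih =>
  set m := N / κ
  have hmN : m < N := Nat.div_lt_self hN hκ
  have hκm : κ * m ≤ N := Nat.mul_div_le N κ
  have htail : ∑ k ∈ Ioc m N, φ k / k ≤ κ * φ N := by
    have hNlt : N < κ * (m + 1) := Nat.lt_mul_div_succ N (by omega)
    have hratio : (N : ℝ) / (m + 1) ≤ κ := by
      rw [div_le_iff₀ (by positivity)]; exact_mod_cast hNlt.le
    calc ∑ k ∈ Ioc m N, φ k / k ≤ N / (m + 1) * φ N := sum_Ioc_div_le hmono hnn m hN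
      _ ≤ κ * φ N := by gcongr; exact hnn N hN
  have hhead : (1 - δ) * ∑ k ∈ Icc 1 m, φ k / k ≤ κ * (δ * φ N) := by
    rcases Nat.eq_zero_or_pos m with hm | hm
    · simp only [hm, Icc_eq_empty_of_lt zero_lt_one, sum_empty, mul_zero]
      have := hnn N hN
      positivity
    · calc (1 - δ) * ∑ k ∈ Icc 1 m, φ k / k ≤ κ * φ m := ih m hmN hm
        _ ≤ κ * (δ * φ (κ * m)) := by gcongr; exact hgrowth m hm
        _ ≤ κ * (δ * φ N) := by
          gcongr
          exact hmono (Set.mem_Ici.2 (Nat.mul_pos (by omega) hm)) (Set.mem_Ici.2 hN) hκm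
  rw [← sum_Icc_one_add_sum_Ioc _ hmN.le, mul_add]
  nlinarith [mul_le_mul_of_nonneg_left htail (sub_nonneg.2 hδ1)]

theorem le_two_mul_mul_sum_Icc_div (hmono : MonotoneOn φ (Set.Ici 1))
    (hnn : ∀ k, 1 ≤ k → 0 ≤ φ k) {A : ℝ} (hA : 0 ≤ A)
    (hdoub : ∀ k, 1 ≤ k → φ (2 * k) ≤ A * φ k) {N : ℕ} (hN : 1 ≤ N) :
    φ N ≤ 2 * A * ∑ k ∈ Icc 1 N, φ k / k := by
  set m := N / 2
  have hblock : φ (m + 1) ≤ 2 * ∑ k ∈ Ioc m N, φ k / k := by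
    have hhalf : (1 : ℝ) / 2 ≤ (N - m : ℕ) / N := by
      rw [div_le_div_iff₀ two_pos (by exact_mod_cast hN)]
      norm_cast
      omega
    nlinarith [le_sum_Ioc_div hmono hnn m N, hnn (m + 1) (by omega)]
  have hsub : ∑ k ∈ Ioc m N, φ k / k ≤ ∑ k ∈ Icc 1 N, φ k / k := by
    rw [← sum_Icc_one_add_sum_Ioc _ (Nat.div_le_self N 2)]
    refine le_add_of_nonneg_left (sum_nonneg fun k hk => ?_)
    exact div_nonneg (hnn k (mem_Icc.1 hk).1) k.cast_nonneg
  calc φ N ≤ φ (2 * (m + 1)) := hmono (Set.mem_Ici.2 hN) (Set.mem_Ici.2 (by omega)) (by omega)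
    _ ≤ A * φ (m + 1) := hdoub _ (by omega)
    _ ≤ 2 * A * ∑ k ∈ Icc 1 N, φ k / k := by nlinarith

end WeightedSum

lemma mul_le_rpow_inv_of_mul_rpow_le {a x S r : ℝ} (ha : 0 ≤ a) (hx : 0 ≤ x) (hr : 0 < r)
    (h : a * x ^ r ≤ S) : a ^ r⁻¹ * x ≤ S ^ r⁻¹ :=
  calc a ^ r⁻¹ * x = (a * x ^ r) ^ r⁻¹ := by
        rw [mul_rpow ha (rpow_nonneg hx r), rpow_rpow_inv hx hr.ne']
    _ ≤ S ^ r⁻¹ := rpow_le_rpow (by positivity) h (by positivity)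

lemma rpow_inv_le_mul_of_le_mul_rpow {a x S r : ℝ} (ha : 0 ≤ a) (hx : 0 ≤ x) (hr : 0 < r)
    (hS : 0 ≤ S) (h : S ≤ a * x ^ r) : S ^ r⁻¹ ≤ a ^ r⁻¹ * x :=
  calc S ^ r⁻¹ ≤ (a * x ^ r) ^ r⁻¹ := rpow_le_rpow hS h (by positivity)
    _ = a ^ r⁻¹ * x := by rw [mul_rpow ha (rpow_nonneg hx r), rpow_rpow_inv hx hr.ne']

/-- Lemma 2.4(b): if `η` is positive, nondecreasing, doubling and satisfies
`sup_k η(k)/η(κk) < 1` for some integer `κ > 1`, and `0 < r < ∞`, then the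
`ℓ^r_η` quasi-norm of the indicator of any finite nonempty set `Γ`, namely
`(∑_{k=1}^{|Γ|} η(k)^r/k)^{1/r}`, is comparable to `η(|Γ|)`. -/
theorem lr_norm_indicator (η : ℕ → ℝ) (D : ℝ)
    (hpos : ∀ k, 1 ≤ k → 0 < η k)
    (hmono : ∀ k, 1 ≤ k → η k ≤ η (k + 1))
    (hdoub : ∀ k, 1 ≤ k → η (2 * k) ≤ D * η k)
    (κ : ℕ) (hκ : 1 < κ) (δ : ℝ) (hδ : δ < 1)
    (hsup : ∀ k, 1 ≤ k → η k / η (κ * k) ≤ δ)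
    (r : ℝ) (hr : 0 < r) :
    ∃ c > 0, ∃ C > 0, ∀ Γ : Finset ℕ, Γ.Nonempty →
      c * η Γ.card ≤ (∑ k ∈ Finset.Icc 1 Γ.card, η k ^ r / (k : ℝ)) ^ (1 / r) ∧
      (∑ k ∈ Finset.Icc 1 Γ.card, η k ^ r / (k : ℝ)) ^ (1 / r) ≤ C * η Γ.card := by
  have hδ0 : 0 ≤ δ :=
    (div_pos (hpos 1 le_rfl) (hpos κ (by omega))).le.trans (by simpa using hsup 1 le_rfl)
  have hD0 : 0 < D :=
    pos_of_mul_pos_left ((hpos 2 one_le_two).trans_le (hdoub 1 le_rfl)) (hpos 1 le_rfl).le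
  have hδr : δ ^ r < 1 := rpow_lt_one hδ0 hδ hr
  have hmonoφ : MonotoneOn (fun k => η k ^ r) (Set.Ici 1) :=
    monotoneOn_nat_Ici_of_le_succ fun k hk => rpow_le_rpow (hpos k hk).le (hmono k hk) hr.le
  have hnnφ : ∀ k, 1 ≤ k → 0 ≤ η k ^ r := fun k hk => rpow_nonneg (hpos k hk).le r
  have hgrowthφ : ∀ k, 1 ≤ k → η k ^ r ≤ δ ^ r * η (κ * k) ^ r := fun k hk => by
    have hκk := hpos (κ * k) (Nat.mul_pos (by omega) hk)
    rw [← mul_rpow hδ0 hκk.le]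
    exact rpow_le_rpow (hpos k hk).le ((div_le_iff₀ hκk).1 (hsup k hk)) hr.le
  have hdoubφ : ∀ k, 1 ≤ k → η (2 * k) ^ r ≤ D ^ r * η k ^ r := fun k hk => by
    rw [← mul_rpow hD0.le (hpos k hk).le]
    exact rpow_le_rpow (hpos _ (by omega)).le (hdoub k hk) hr.le
  refine ⟨(2 * D ^ r)⁻¹ ^ r⁻¹, by positivity, (κ / (1 - δ ^ r)) ^ r⁻¹,
    rpow_pos_of_pos (div_pos (by positivity) (sub_pos.2 hδr)) _, fun Γ hΓ => ?_⟩
  have hN : 1 ≤ Γ.card := hΓ.card_pos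
  have hupper := one_sub_mul_sum_Icc_div_le hmonoφ hnnφ hκ (rpow_nonneg hδ0 r) hδr.le hgrowthφ hN
  have hlower := le_two_mul_mul_sum_Icc_div hmonoφ hnnφ (by positivity) hdoubφ hN
  rw [one_div]
  constructor
  · refine mul_le_rpow_inv_of_mul_rpow_le (by positivity) (hpos _ hN).le hr
      ((inv_mul_le_iff₀ (by positivity)).2 hlower)
  · refine rpow_inv_le_mul_of_le_mul_rpow (by positivity) (hpos _ hN).le hr
      (sum_nonneg fun k hk => div_nonneg (hnnφ k (mem_Icc.1 hk).1) k.cast_nonneg) ?_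
    rwa [div_mul_eq_mul_div, le_div_iff₀ (sub_pos.2 hδr), mul_comm]
end

section
/- Let {e_j} be a normalized unconditional basis in quasi-Banach 𝔹 and suppose that for some α > 0 there is C with sup_{N≥1} N^α γ_N(x) ≤ C ‖x‖_{ℓ^∞_{k^α η(k)}} for all x (the embedding into the greedy class 𝒢^α_∞), where γ_N is the greedy approximation error and {k^α η(k)} is nondecreasing and doubling. Then there is C' with ‖∑_{k∈Γ} e_k‖ ≤ C' η(N) for all Γ with |Γ| = N. -/
/-- The indicator coefficient sequence of a finite set `Γ`. -/
noncomputable def indic (Γ : Finset ℕ) : ℕ → ℝ := fun k => if k ∈ Γ then 1 else 0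

/-!
Test the embedding on `x = 2 • 𝟙_{Γ'} + 𝟙_Γ` with `Γ'` disjoint from `Γ` and `|Γ'| = |Γ| = N`.
Instead of choosing `Γ'` first, take a permutation `σ` of `ℕ` carrying `[N, 2N)` onto `Γ` and
put `Γ' = σ '' [0, N)`: then `x ∘ σ = twoStep N` is nonincreasing, so `σ` is a greedy ordering,
and deleting the `N` largest coefficients leaves `𝟙_Γ`. With `ω k = k ^ α * η k`, the
`ℓ^∞_ω` norm of `x` is at most `2 ω(2N) ≤ 2D ω(N)`, hence `N ^ α ‖𝟙_Γ‖ ≤ 2CD N ^ α η(N)`.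
-/

theorem Finset.exists_equiv_mem_iff_of_card_eq {α : Type*} [Infinite α] {s t : Finset α}
    (h : s.card = t.card) : ∃ σ : α ≃ α, ∀ x, σ x ∈ t ↔ x ∈ s := by
  let e := Finset.equivOfCardEq h
  let f : (s : Set α) ↪ α := ⟨fun x => e x, fun x y hxy => e.injective (Subtype.ext hxy)⟩
  have hs : Cardinal.mk (s : Set α) < Cardinal.mk α :=
    (Cardinal.lt_aleph0_of_finite _).trans_le (Cardinal.aleph0_le_mk α)
  obtain ⟨σ, hσ⟩ := Cardinal.extend_function_of_lt f hs ⟨Equiv.refl α⟩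
  refine ⟨σ, fun x => ⟨fun hx => ?_, fun hx => hσ ⟨x, hx⟩ ▸ (e ⟨x, hx⟩).2⟩⟩
  obtain ⟨y, hy⟩ := e.surjective ⟨σ x, hx⟩
  have : σ y = σ x := (hσ y).trans (congrArg Subtype.val hy)
  exact σ.injective this ▸ y.2

def twoStep (N k : ℕ) : ℝ := if k < N then 2 else if k < 2 * N then 1 else 0

namespace twoStep

theorem nonneg (N k : ℕ) : 0 ≤ twoStep N k := by
  unfold twoStep; split_ifs <;> norm_num

theorem le_two (N k : ℕ) : twoStep N k ≤ 2 := by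
  unfold twoStep; split_ifs <;> norm_num

theorem eq_zero {N k : ℕ} (hk : 2 * N ≤ k) : twoStep N k = 0 := by
  unfold twoStep; split_ifs <;> first | rfl | omega

theorem succ_le (N k : ℕ) : twoStep N (k + 1) ≤ twoStep N k := by
  unfold twoStep; split_ifs <;> norm_num <;> omega

theorem erase_head_eq_indic {N : ℕ} {Γ : Finset ℕ} (σ : ℕ ≃ ℕ)
    (hσ : ∀ k, σ k ∈ Γ ↔ k ∈ Finset.Ico N (2 * N)) :
    (fun i => if i ∈ (Finset.range N).image σ then 0 else twoStep N (σ.symm i)) = indic Γ := by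
  funext i
  obtain ⟨k, rfl⟩ := σ.surjective i
  simp only [Finset.mem_image, Finset.mem_range, σ.injective.eq_iff, exists_eq_right,
    Equiv.symm_apply_apply, indic, hσ, Finset.mem_Ico, twoStep]
  split_ifs <;> first | rfl | omega

end twoStep

section Weight

variable {η : ℕ → ℝ} {α : ℝ}

theorem weight_pos (hηpos : ∀ k, 1 ≤ k → 0 < η k) {k : ℕ} (hk : 1 ≤ k) :
    0 < (k : ℝ) ^ α * η k :=
  mul_pos (Real.rpow_pos_of_pos (by exact_mod_cast hk) α) (hηpos k hk)

theorem weight_mono (hωmono : ∀ k : ℕ, 1 ≤ k → (k : ℝ) ^ α * η k ≤ ((k : ℝ) + 1) ^ α * η (k + 1))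
    {a b : ℕ} (ha : 1 ≤ a) (hab : a ≤ b) : (a : ℝ) ^ α * η a ≤ (b : ℝ) ^ α * η b :=
  monotoneOn_nat_Ici_of_le_succ (f := fun k : ℕ => (k : ℝ) ^ α * η k)
    (fun k hk => by exact_mod_cast hωmono k hk) ha (ha.trans hab) hab

theorem weight_mul_twoStep_le (hηpos : ∀ k, 1 ≤ k → 0 < η k)
    (hωmono : ∀ k : ℕ, 1 ≤ k → (k : ℝ) ^ α * η k ≤ ((k : ℝ) + 1) ^ α * η (k + 1))
    {N : ℕ} (hN : 1 ≤ N) (k : ℕ) :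
    ((k : ℝ) + 1) ^ α * η (k + 1) * twoStep N k ≤ 2 * (((2 * N : ℕ) : ℝ) ^ α * η (2 * N)) := by
  rcases lt_or_ge k (2 * N) with hk | hk
  · have hw : ((k : ℝ) + 1) ^ α * η (k + 1) ≤ ((2 * N : ℕ) : ℝ) ^ α * η (2 * N) := by
      exact_mod_cast weight_mono hωmono (Nat.le_add_left 1 k) hk
    rw [mul_comm 2]
    exact mul_le_mul hw (twoStep.le_two N k) (twoStep.nonneg N k)
      (weight_pos hηpos (by omega)).le
  · rw [twoStep.eq_zero hk, mul_zero]
    exact mul_nonneg zero_le_two (weight_pos hηpos (by omega)).le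

end Weight

theorem greedy_embedding_implies_right_democracy_general (Nrm : (ℕ → ℝ) → ℝ)
    (η : ℕ → ℝ) (α C D : ℝ) (hC : 0 < C)
    (hηpos : ∀ k, 1 ≤ k → 0 < η k)
    (hωmono : ∀ k : ℕ, 1 ≤ k → (k : ℝ) ^ α * η k ≤ ((k : ℝ) + 1) ^ α * η (k + 1))
    (hωdoub : ∀ k, 1 ≤ k →
      ((2 * k : ℕ) : ℝ) ^ α * η (2 * k) ≤ D * ((k : ℝ) ^ α * η k))
    (hemb : ∀ (c : ℕ → ℝ) (π : ℕ → ℕ), Function.Bijective π →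
      (∀ k, |c (π (k + 1))| ≤ |c (π k)|) →
      ∀ M : ℝ, (∀ k : ℕ, ((k : ℝ) + 1) ^ α * η (k + 1) * |c (π k)| ≤ M) →
      ∀ N : ℕ, 1 ≤ N →
        (N : ℝ) ^ α *
          Nrm (fun i => if i ∈ (Finset.range N).image π then 0 else c i) ≤ C * M) :
    ∃ C' > 0, ∀ Γ : Finset ℕ, Γ.Nonempty → Nrm (indic Γ) ≤ C' * η Γ.card := by
  have hD : 0 < D := pos_of_mul_pos_left
    ((weight_pos hηpos (by norm_num : 1 ≤ 2 * 1)).trans_le (hωdoub 1 le_rfl)) (weight_pos hηpos le_rfl).le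
  refine ⟨2 * C * D, by positivity, fun Γ hΓ => ?_⟩
  set N := Γ.card
  have hN : 1 ≤ N := Finset.card_pos.mpr hΓ
  obtain ⟨σ, hσ⟩ := Finset.exists_equiv_mem_iff_of_card_eq (s := Finset.Ico N (2 * N)) (t := Γ)
    (by rw [Nat.card_Ico]; omega)
  have key := hemb (fun i => twoStep N (σ.symm i)) σ σ.bijective
    (fun k => by
      simpa only [Equiv.symm_apply_apply, abs_of_nonneg (twoStep.nonneg _ _)]
        using twoStep.succ_le N k)
    _ (fun k => by
      simpa only [Equiv.symm_apply_apply, abs_of_nonneg (twoStep.nonneg _ _)]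
        using weight_mul_twoStep_le hηpos hωmono hN k) N hN
  rw [twoStep.erase_head_eq_indic σ hσ] at key
  refine le_of_mul_le_mul_left ?_ (Real.rpow_pos_of_pos (Nat.cast_pos.mpr hN) α)
  calc (N : ℝ) ^ α * Nrm (indic Γ)
      ≤ C * (2 * (((2 * N : ℕ) : ℝ) ^ α * η (2 * N))) := key
    _ ≤ C * (2 * (D * ((N : ℝ) ^ α * η N))) := by gcongr C * (2 * ?_); exact hωdoub N hN
    _ = (N : ℝ) ^ α * (2 * C * D * η N) := by ring

/-- (3 ⇒ 1 of Theorem 3.1): if the greedy errors satisfy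
`sup_N N^α γ_N(x) ≤ C ‖x‖_{ℓ^∞_{k^α η(k)}}` for all `x` (the embedding
`ℓ^∞_{k^α η(k)} ↪ 𝒢^α_∞`), with `k^α η(k)` nondecreasing and doubling, then
`‖∑_{k∈Γ} e_k‖ ≤ C' η(|Γ|)` for all finite `Γ`. -/
theorem greedy_embedding_implies_right_democracy (Nrm : (ℕ → ℝ) → ℝ)
    (hnn : ∀ x, 0 ≤ Nrm x)
    (hone : ∀ j : ℕ, Nrm (indic {j}) = 1)
    (hlat : ∀ x y : ℕ → ℝ, (∀ k, |y k| ≤ |x k|) → Nrm y ≤ Nrm x)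
    (η : ℕ → ℝ) (α C D : ℝ) (hα : 0 < α) (hC : 0 < C)
    (hηpos : ∀ k, 1 ≤ k → 0 < η k)
    (hωmono : ∀ k : ℕ, 1 ≤ k → (k : ℝ) ^ α * η k ≤ ((k : ℝ) + 1) ^ α * η (k + 1))
    (hωdoub : ∀ k, 1 ≤ k →
      ((2 * k : ℕ) : ℝ) ^ α * η (2 * k) ≤ D * ((k : ℝ) ^ α * η k))
    (hemb : ∀ (c : ℕ → ℝ) (π : ℕ → ℕ), Function.Bijective π →
      (∀ k, |c (π (k + 1))| ≤ |c (π k)|) →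
      ∀ M : ℝ, (∀ k : ℕ, ((k : ℝ) + 1) ^ α * η (k + 1) * |c (π k)| ≤ M) →
      ∀ N : ℕ, 1 ≤ N →
        (N : ℝ) ^ α *
          Nrm (fun i => if i ∈ (Finset.range N).image π then 0 else c i) ≤ C * M) :
    ∃ C' > 0, ∀ Γ : Finset ℕ, Γ.Nonempty → Nrm (indic Γ) ≤ C' * η Γ.card :=
  greedy_embedding_implies_right_democracy_general Nrm η α C D hC hηpos hωmono hωdoub hemb
end

section
/- In the setting of Theorem 4.2: if the Bernstein inequality ‖x‖_{ℓ^q_{k^α η(k)}} ≤ C N^α ‖x‖_𝔹 holds for all x with at most N nonzero coefficients (all N ≥ 1), then ‖∑_{k∈Γ} e_k‖_𝔹 ≥ c·η(N) for all Γ with |Γ| = N, where c depends only on C, α, q and the doubling constant of η. -/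
/-! Rearrange `indic Γ` so that its `N` ones come first. The Bernstein inequality then bounds
`∑_{k ≤ N} (k^α η(k))^q / k` by `(C N^α ‖indic Γ‖)^q`. The terms with `k > N/2` alone contribute
at least half of `((N/2+1)^α η(N/2+1))^q`, and doubling gives `η(N) ≤ D η(N/2+1)`, so the factor
`N^α` cancels. -/

open Finset

theorem exists_perm_mem_iff_lt_card (Γ : Finset ℕ) : ∃ π : ℕ ≃ ℕ, ∀ k, π k ∈ Γ ↔ k < #Γ := by
  classical
  let e : {k // k < #Γ} ≃ Γ := Fin.equivSubtype.symm.trans Γ.equivFin.symm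
  have : Infinite {k // ¬k < #Γ} := (Set.finite_lt_nat #Γ).infinite_compl.to_subtype
  have : Infinite {k // k ∉ Γ} := Γ.finite_toSet.infinite_compl.to_subtype
  obtain ⟨f⟩ : Nonempty ({k // ¬k < #Γ} ≃ {k // k ∉ Γ}) := nonempty_equiv_of_countable
  refine ⟨e.subtypeCongr f, fun k => ?_⟩
  by_cases hk : k < #Γ
  · simp [Equiv.subtypeCongr, hk]
  · simpa [Equiv.subtypeCongr, hk] using (f ⟨k, hk⟩).2

theorem half_le_sum_div_succ {f : ℕ → ℝ} (hf0 : ∀ k, 1 ≤ k → 0 ≤ f k)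
    (hf : MonotoneOn f (Set.Ici 1)) {N : ℕ} (hN : 1 ≤ N) :
    f (N / 2 + 1) / 2 ≤ ∑ k ∈ range N, f (k + 1) / (k + 1) := by
  have hN0 : (0 : ℝ) < N := by exact_mod_cast hN
  have hm0 := hf0 (N / 2 + 1) le_add_self
  have hterm : ∀ k ∈ Ico (N / 2) N, f (N / 2 + 1) / N ≤ f (k + 1) / (k + 1) := by
    intro k hk
    obtain ⟨hk₁, hk₂⟩ := mem_Ico.mp hk
    have hmk : f (N / 2 + 1) ≤ f (k + 1) := hf (by simp) (by simp) (by omega)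
    exact div_le_div₀ (hm0.trans hmk) hmk (by positivity) (by exact_mod_cast hk₂)
  have hcard : (N : ℝ) / 2 ≤ #(Ico (N / 2) N) := by
    rw [Nat.card_Ico, div_le_iff₀ two_pos]
    exact_mod_cast (by omega : N ≤ (N - N / 2) * 2)
  calc f (N / 2 + 1) / 2 = (N : ℝ) / 2 * (f (N / 2 + 1) / N) := by field_simp
    _ ≤ #(Ico (N / 2) N) * (f (N / 2 + 1) / N) := by gcongr
    _ ≤ ∑ k ∈ Ico (N / 2) N, f (k + 1) / (k + 1) := by
      simpa only [nsmul_eq_mul] using card_nsmul_le_sum _ _ _ hterm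
    _ ≤ ∑ k ∈ range N, f (k + 1) / (k + 1) := by
      refine sum_le_sum_of_subset_of_nonneg (fun k hk => mem_range.mpr (mem_Ico.mp hk).2)
        fun k _ _ => ?_
      have := hf0 (k + 1) le_add_self
      positivity

theorem div_two_rpow_le_rpow_sum {w : ℕ → ℝ} (hw0 : ∀ k, 1 ≤ k → 0 ≤ w k)
    (hw : MonotoneOn w (Set.Ici 1)) {q : ℝ} (hq : 0 < q) {N : ℕ} (hN : 1 ≤ N) :
    w (N / 2 + 1) / 2 ^ (1 / q) ≤ (∑ k ∈ range N, w (k + 1) ^ q / (k + 1)) ^ (1 / q) := by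
  have hm0 := hw0 (N / 2 + 1) le_add_self
  have hsum := half_le_sum_div_succ (f := fun k => w k ^ q)
    (fun k hk => Real.rpow_nonneg (hw0 k hk) q)
    (fun a ha b hb hab => Real.rpow_le_rpow (hw0 a ha) (hw ha hb hab) hq.le) hN
  calc w (N / 2 + 1) / 2 ^ (1 / q) = (w (N / 2 + 1) ^ q / 2) ^ (1 / q) := by
        rw [Real.div_rpow (by positivity) (by norm_num), one_div, Real.rpow_rpow_inv hm0 hq.ne']
    _ ≤ _ := by gcongr

theorem rpow_mul_le_two_rpow_mul_of_doubling {η : ℕ → ℝ} {α D : ℝ} (hα : 0 ≤ α)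
    (hmono : MonotoneOn η (Set.Ici 1)) (hdoub : ∀ k, 1 ≤ k → η (2 * k) ≤ D * η k)
    {N : ℕ} (hN : 1 ≤ N) (hηN : 0 ≤ η N) :
    (N : ℝ) ^ α * η N ≤ 2 ^ α * D * (((N / 2 + 1 : ℕ) : ℝ) ^ α * η (N / 2 + 1)) := by
  have hpow : (N : ℝ) ^ α ≤ 2 ^ α * ((N / 2 + 1 : ℕ) : ℝ) ^ α := by
    rw [← Real.mul_rpow (by norm_num) (by positivity)]
    gcongr
    exact_mod_cast (by omega : N ≤ 2 * (N / 2 + 1))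
  have hη : η N ≤ D * η (N / 2 + 1) :=
    (hmono (Set.mem_Ici.mpr hN) (Set.mem_Ici.mpr (by omega)) (by omega)).trans (hdoub _ le_add_self)
  calc (N : ℝ) ^ α * η N ≤ 2 ^ α * ((N / 2 + 1 : ℕ) : ℝ) ^ α * (D * η (N / 2 + 1)) :=
        mul_le_mul hpow hη hηN (by positivity)
    _ = _ := by ring

theorem bernstein_implies_left_democracy_general (Nrm : (ℕ → ℝ) → ℝ)
    (η : ℕ → ℝ) (α q C D : ℝ) (hα : 0 < α) (hq : 0 < q) (hC : 0 < C)
    (hηpos : ∀ k, 1 ≤ k → 0 < η k)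
    (hmono : ∀ k, 1 ≤ k → η k ≤ η (k + 1))
    (hdoub : ∀ k, 1 ≤ k → η (2 * k) ≤ D * η k)
    (hbern : ∀ (c : ℕ → ℝ) (π : ℕ → ℕ), Function.Bijective π →
      (∀ k, |c (π (k + 1))| ≤ |c (π k)|) →
      ∀ N : ℕ, 1 ≤ N → (∃ Γ : Finset ℕ, Γ.card ≤ N ∧ ∀ i ∉ Γ, c i = 0) →
        (∑ k ∈ Finset.range N,
            (((k : ℝ) + 1) ^ α * η (k + 1) * |c (π k)|) ^ q / ((k : ℝ) + 1)) ^ (1 / q)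
          ≤ C * (N : ℝ) ^ α * Nrm c) :
    ∃ c' > 0, ∀ N : ℕ, 1 ≤ N → ∀ Γ : Finset ℕ, Γ.card = N →
      c' * η N ≤ Nrm (indic Γ) := by
  have hηmono : MonotoneOn η (Set.Ici 1) := monotoneOn_nat_Ici_of_le_succ hmono
  have hD : 0 < D := pos_of_mul_pos_left ((hηpos 2 one_le_two).trans_le (hdoub 1 le_rfl))
    (hηpos 1 le_rfl).le
  refine ⟨1 / (2 ^ (1 / q) * 2 ^ α * C * D), by positivity, fun N hN Γ hΓ => ?_⟩
  obtain ⟨π, hπ⟩ := exists_perm_mem_iff_lt_card Γ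
  have hcoef : ∀ k, |indic Γ (π k)| = if k < N then 1 else 0 := by
    intro k
    simp [indic, hπ, hΓ, apply_ite]
  have hbernΓ := hbern (indic Γ) π π.bijective
    (fun k => by simp only [hcoef]; split_ifs <;> first | omega | norm_num) N hN
    ⟨Γ, hΓ.le, fun i hi => if_neg hi⟩
  set w : ℕ → ℝ := fun k => (k : ℝ) ^ α * η k
  have hsum : ∑ k ∈ range N, (((k : ℝ) + 1) ^ α * η (k + 1) * |indic Γ (π k)|) ^ q / ((k : ℝ) + 1)
      = ∑ k ∈ range N, w (k + 1) ^ q / (k + 1) :=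
    sum_congr rfl fun k hk => by simp [hcoef, mem_range.mp hk, w]
  rw [hsum] at hbernΓ
  have hwmono : MonotoneOn w (Set.Ici 1) :=
    MonotoneOn.mul (fun a _ b _ hab => by gcongr) hηmono (fun _ _ => by positivity)
      fun k hk => (hηpos k hk).le
  have hlower := div_two_rpow_le_rpow_sum (fun k hk => mul_nonneg (by positivity) (hηpos k hk).le)
    hwmono hq hN
  have hdouble := rpow_mul_le_two_rpow_mul_of_doubling hα.le hηmono hdoub hN (hηpos N hN).le
  refine le_of_mul_le_mul_right ?_ (by positivity : (0 : ℝ) < C * (N : ℝ) ^ α)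
  calc 1 / (2 ^ (1 / q) * 2 ^ α * C * D) * η N * (C * (N : ℝ) ^ α)
        = (N : ℝ) ^ α * η N / (2 ^ α * D) / 2 ^ (1 / q) := by field_simp
    _ ≤ w (N / 2 + 1) / 2 ^ (1 / q) := by
        gcongr
        rw [div_le_iff₀ (by positivity)]
        linarith
    _ ≤ C * (N : ℝ) ^ α * Nrm (indic Γ) := hlower.trans hbernΓ
    _ = Nrm (indic Γ) * (C * (N : ℝ) ^ α) := by ring

/-- (2 ⇒ 1 of Theorem 4.2): if the Bernstein inequality
`‖x‖_{ℓ^q_{k^α η(k)}} ≤ C N^α ‖x‖` holds for every `x` with at most `N` nonzero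
coefficients (the `ℓ^q` norm being computed from the decreasing rearrangement of
the coefficients), then `‖∑_{k∈Γ} e_k‖ ≥ c η(N)` for all `Γ` with `|Γ| = N`. -/
theorem bernstein_implies_left_democracy (Nrm : (ℕ → ℝ) → ℝ)
    (hnn : ∀ x, 0 ≤ Nrm x)
    (hone : ∀ j : ℕ, Nrm (indic {j}) = 1)
    (hlat : ∀ x y : ℕ → ℝ, (∀ k, |y k| ≤ |x k|) → Nrm y ≤ Nrm x)
    (η : ℕ → ℝ) (α q C D : ℝ) (hα : 0 < α) (hq : 0 < q) (hC : 0 < C)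
    (hηpos : ∀ k, 1 ≤ k → 0 < η k)
    (hmono : ∀ k, 1 ≤ k → η k ≤ η (k + 1))
    (hdoub : ∀ k, 1 ≤ k → η (2 * k) ≤ D * η k)
    (hbern : ∀ (c : ℕ → ℝ) (π : ℕ → ℕ), Function.Bijective π →
      (∀ k, |c (π (k + 1))| ≤ |c (π k)|) →
      ∀ N : ℕ, 1 ≤ N → (∃ Γ : Finset ℕ, Γ.card ≤ N ∧ ∀ i ∉ Γ, c i = 0) →
        (∑ k ∈ Finset.range N,
            (((k : ℝ) + 1) ^ α * η (k + 1) * |c (π k)|) ^ q / ((k : ℝ) + 1)) ^ (1 / q)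
          ≤ C * (N : ℝ) ^ α * Nrm c) :
    ∃ c' > 0, ∀ N : ℕ, 1 ≤ N → ∀ Γ : Finset ℕ, Γ.card = N →
      c' * η N ≤ Nrm (indic Γ) :=
  bernstein_implies_left_democracy_general Nrm η α q C D hα hq hC hηpos hmono hdoub hbern
end
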